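/- Let U ⊆ ℝ^p × ℝ^q be an open set and let F : U → ℝ be a C^∞ map such that F(x,0) = 0 whenever (x,0) ∈ U. Then the function F̃ : Ω_V^U → ℝ defined by F̃(x,ξ,t) = (1/t)·F(x,tξ) for t ≠ 0 and F̃(x,ξ,0) = (∂F/∂ξ)(x,0)·ξ is a C^∞ map on Ω_V^U (in the sense of ContDiffOn, with one-sided derivatives in t at the boundary). -/

import Mathlib

/-
For `t ≠ 0`, `F̃(x,ξ,t) = t⁻¹ F(x,tξ)` is visibly smooth. Near a point with `t = 0` we use
Hadamard's lemma: when `F(x,0) = 0`, the fundamental theorem of calculus along `s ↦ (x, stξ)` gives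
`F̃(x,ξ,t) = ∫₀¹ DF(x, stξ)(0, ξ) ds` for every `t`, including `t = 0`, and a parametric integral of
a smooth integrand is smooth. Since `U` need not contain the segments `{x} × [0, tξ]`, the formula
is applied to `χ F` for a bump function `χ` supported in `U` and equal to `1` near `(x,0)`: it is
smooth on the whole space, still vanishes on `ξ = 0`, and has the same `F̃` near the point.
-/

open Set

noncomputable section

/-- Points of `ℝ^p × ℝ^q × [0,1]` (the interval condition is imposed via the set `Omega`). -/
abbrev Pt (p q : ℕ) := (Fin p → ℝ) × (Fin q → ℝ) × ℝ

/-- `Ω_V^U = {(x,ξ,t) ∈ ℝ^p × ℝ^q × [0,1] : (x, tξ) ∈ U}`. -/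
def Omega {p q : ℕ} (U : Set ((Fin p → ℝ) × (Fin q → ℝ))) : Set (Pt p q) :=
  {z | z.2.2 ∈ Icc (0 : ℝ) 1 ∧ (z.1, z.2.2 • z.2.1) ∈ U}

/-- For `F : ℝ^p × ℝ^q → ℝ` with `F(x,0) = 0`, the rescaled map
`F̃(x,ξ,t) = (1/t)·F(x,tξ)` for `t ≠ 0`, `F̃(x,ξ,0) = (∂F/∂ξ)(x,0)·ξ`. -/
noncomputable def FtildeR {p q : ℕ} (F : (Fin p → ℝ) × (Fin q → ℝ) → ℝ) : Pt p q → ℝ :=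
  fun z =>
    if z.2.2 = 0 then fderiv ℝ (fun ξ : Fin q → ℝ => F (z.1, ξ)) 0 z.2.1
    else z.2.2⁻¹ * F (z.1, z.2.2 • z.2.1)

open Filter Topology MeasureTheory

universe u

section ParametricIntegral

variable {E : Type u} [NormedAddCommGroup E] [NormedSpace ℝ E] [ProperSpace E]

theorem hasFDerivAt_parametric_intervalIntegral {G : Type*} [NormedAddCommGroup G]
    [NormedSpace ℝ G] {H : E × ℝ → G} (hH : ContDiff ℝ 1 H) (a b : ℝ) (z₀ : E) :
    HasFDerivAt (fun z => ∫ s in a..b, H (z, s))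
      (∫ s in a..b, (fderiv ℝ H (z₀, s)).comp (.inl ℝ E ℝ)) z₀ := by
  have hH' : Continuous fun w : E × ℝ => (fderiv ℝ H w).comp (.inl ℝ E ℝ) :=
    (hH.continuous_fderiv one_ne_zero).clm_comp continuous_const
  obtain ⟨C, hC⟩ := ((isCompact_closedBall z₀ 1).prod isCompact_uIcc).exists_bound_of_continuousOn
    (hH'.continuousOn (s := Metric.closedBall z₀ 1 ×ˢ uIcc a b))
  have hdiff : Differentiable ℝ H := hH.differentiable one_ne_zero
  refine intervalIntegral.hasFDerivAt_integral_of_dominated_of_fderiv_le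
    (F' := fun z s => (fderiv ℝ H (z, s)).comp (.inl ℝ E ℝ)) (bound := fun _ => C)
    (Metric.ball_mem_nhds z₀ one_pos) ?_ ?_ ?_ ?_ intervalIntegrable_const ?_
  · exact .of_forall fun z => (hdiff.continuous.comp (.prodMk_right z)).aestronglyMeasurable
  · exact (hdiff.continuous.comp (.prodMk_right z₀)).intervalIntegrable a b
  · exact (hH'.comp (.prodMk_right z₀)).aestronglyMeasurable
  · exact .of_forall fun s hs z hz =>
      hC (z, s) ⟨Metric.ball_subset_closedBall hz, uIoc_subset_uIcc hs⟩
  · exact .of_forall fun s _ z _ => (hdiff (z, s)).hasFDerivAt.comp z (hasFDerivAt_prodMk_left z s)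

-- `G` lives in the universe of `E` so that the induction hypothesis applies to `E →L[ℝ] G`.
theorem ContDiff.parametric_intervalIntegral_nat (n : ℕ) {G : Type u} [NormedAddCommGroup G]
    [NormedSpace ℝ G] {H : E × ℝ → G} (hH : ContDiff ℝ n H) (a b : ℝ) :
    ContDiff ℝ n fun z => ∫ s in a..b, H (z, s) := by
  induction n generalizing G with
  | zero =>
    rw [Nat.cast_zero, contDiff_zero] at hH ⊢
    exact intervalIntegral.continuous_parametric_intervalIntegral_of_continuous'
      (f := fun z s => H (z, s)) hH a b
  | succ n ih =>
    have hH1 : ContDiff ℝ 1 H := hH.of_le (by exact_mod_cast Nat.le_add_left 1 n)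
    have hfderiv : fderiv ℝ (fun z => ∫ s in a..b, H (z, s)) =
        fun z => ∫ s in a..b, (fderiv ℝ H (z, s)).comp (.inl ℝ E ℝ) :=
      funext fun z => (hasFDerivAt_parametric_intervalIntegral hH1 a b z).fderiv
    rw [Nat.cast_add, Nat.cast_one, contDiff_succ_iff_fderiv] at hH ⊢
    refine ⟨fun z => (hasFDerivAt_parametric_intervalIntegral hH1 a b z).differentiableAt,
      by simp, ?_⟩
    rw [hfderiv]
    exact ih (hH.2.2.clm_comp contDiff_const)

theorem ContDiff.parametric_intervalIntegral {G : Type u} [NormedAddCommGroup G]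
    [NormedSpace ℝ G] {n : ℕ∞} {H : E × ℝ → G} (hH : ContDiff ℝ n H) (a b : ℝ) :
    ContDiff ℝ n fun z => ∫ s in a..b, H (z, s) := by
  induction n using ENat.recTopCoe with
  | top =>
    exact contDiff_infty.2 fun m => (contDiff_infty.1 hH m).parametric_intervalIntegral_nat m a b
  | coe m => exact hH.parametric_intervalIntegral_nat m a b

end ParametricIntegral

theorem integral_fderiv_apply_inr_eq_sub {E F G : Type*} [NormedAddCommGroup E] [NormedSpace ℝ E]
    [NormedAddCommGroup F] [NormedSpace ℝ F] [NormedAddCommGroup G] [NormedSpace ℝ G]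
    [CompleteSpace G] {g : E × F → G} (hg : ContDiff ℝ 1 g) (x : E) (v : F) :
    ∫ s in (0 : ℝ)..1, fderiv ℝ g (x, s • v) (0, v) = g (x, v) - g (x, 0) := by
  have hpath : ∀ s : ℝ, HasDerivAt (fun s : ℝ => ((x, s • v) : E × F)) (0, v) s := fun s =>
    (hasDerivAt_const s x).prodMk (by simpa using (hasDerivAt_id s).smul_const v)
  have hcont : Continuous fun s : ℝ => fderiv ℝ g (x, s • v) (0, v) :=
    ((hg.continuous_fderiv one_ne_zero).comp
      (continuous_const.prodMk (continuous_id.smul continuous_const))).clm_apply continuous_const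
  rw [intervalIntegral.integral_eq_sub_of_hasDerivAt
    (fun s _ => ((hg.differentiable one_ne_zero _).hasFDerivAt.comp_hasDerivAt s (hpath s)))
    (hcont.intervalIntegrable 0 1)]
  simp only [Function.comp_apply, one_smul, zero_smul]

theorem exists_contDiff_tsupport_subset_eventuallyEq_one {E : Type*} [NormedAddCommGroup E]
    [NormedSpace ℝ E] [HasContDiffBump E] {U : Set E} {c : E} (hU : U ∈ 𝓝 c) (n : ℕ∞) :
    ∃ χ : E → ℝ, ContDiff ℝ n χ ∧ tsupport χ ⊆ U ∧ χ =ᶠ[𝓝 c] 1 := by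
  obtain ⟨ε, hε, hball⟩ := Metric.mem_nhds_iff.1 hU
  let χ : ContDiffBump c := ⟨ε / 4, ε / 2, by positivity, by linarith⟩
  refine ⟨χ, χ.contDiff, ?_, χ.eventuallyEq_one⟩
  rw [χ.tsupport_eq]
  exact (Metric.closedBall_subset_ball (half_lt_self hε)).trans hball

theorem ContDiffOn.contDiff_smul_of_tsupport_subset {E G : Type*} [NormedAddCommGroup E]
    [NormedSpace ℝ E] [NormedAddCommGroup G] [NormedSpace ℝ G] {n : WithTop ℕ∞} {U : Set E}
    (hU : IsOpen U) {F : E → G} (hF : ContDiffOn ℝ n F U) {χ : E → ℝ} (hχ : ContDiff ℝ n χ)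
    (hsupp : tsupport χ ⊆ U) : ContDiff ℝ n fun w => χ w • F w := by
  refine contDiff_iff_contDiffAt.2 fun w => ?_
  by_cases hw : w ∈ U
  · exact hχ.contDiffAt.smul (hF.contDiffAt (hU.mem_nhds hw))
  · have hzero := (notMem_tsupport_iff_eventuallyEq.1
      fun h => hw (hsupp (tsupport_smul_subset_left χ F h)))
    exact contDiffAt_const.congr_of_eventuallyEq hzero

section Rescaling

variable {p q : ℕ}

theorem FtildeR_eq_integral {g : (Fin p → ℝ) × (Fin q → ℝ) → ℝ} (hg : ContDiff ℝ 1 g)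
    (hg0 : ∀ x, g (x, 0) = 0) (z : Pt p q) :
    FtildeR g z = ∫ s in (0 : ℝ)..1, fderiv ℝ g (z.1, (s * z.2.2) • z.2.1) (0, z.2.1) := by
  obtain ⟨x, ξ, t⟩ := z
  by_cases ht : t = 0
  · subst ht
    simp only [FtildeR, if_true, mul_zero, zero_smul, intervalIntegral.integral_const, sub_zero,
      one_smul]
    exact DFunLike.congr_fun ((hg.differentiable one_ne_zero _).hasFDerivAt.comp 0
      (hasFDerivAt_prodMk_right x 0)).fderiv ξ
  · have hscale : ∀ s : ℝ, fderiv ℝ g (x, (s * t) • ξ) (0, ξ) =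
        t⁻¹ * fderiv ℝ g (x, s • t • ξ) (0, t • ξ) := fun s => by
      rw [mul_smul, ← smul_eq_mul, ← map_smul, Prod.smul_mk, smul_zero, inv_smul_smul₀ ht]
    simp only [FtildeR, if_neg ht, hscale, intervalIntegral.integral_const_mul,
      integral_fderiv_apply_inr_eq_sub hg, hg0, sub_zero]

theorem contDiff_FtildeR {n : ℕ∞} {g : (Fin p → ℝ) × (Fin q → ℝ) → ℝ}
    (hg : ContDiff ℝ (n + 1) g) (hg0 : ∀ x, g (x, 0) = 0) : ContDiff ℝ n (FtildeR g) := by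
  have hg1 : ContDiff ℝ 1 g := hg.of_le (by exact_mod_cast le_add_self)
  rw [funext (FtildeR_eq_integral hg1 hg0)]
  refine ContDiff.parametric_intervalIntegral (H := fun w : Pt p q × ℝ =>
    fderiv ℝ g (w.1.1, (w.2 * w.1.2.2) • w.1.2.1) (0, w.1.2.1)) ?_ 0 1
  have hpath : ContDiff ℝ n fun w : Pt p q × ℝ =>
      ((w.1.1, (w.2 * w.1.2.2) • w.1.2.1) : (Fin p → ℝ) × (Fin q → ℝ)) := by fun_prop
  exact ((hg.fderiv_right (m := n) le_rfl).comp hpath).clm_apply (by fun_prop)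

theorem contDiffAt_FtildeR_of_ne_zero {n : WithTop ℕ∞} {U : Set ((Fin p → ℝ) × (Fin q → ℝ))}
    (hU : IsOpen U) {F : (Fin p → ℝ) × (Fin q → ℝ) → ℝ} (hF : ContDiffOn ℝ n F U) {z : Pt p q}
    (hz : (z.1, z.2.2 • z.2.1) ∈ U) (ht : z.2.2 ≠ 0) : ContDiffAt ℝ n (FtildeR F) z := by
  have hFz : ContDiffAt ℝ n (fun z : Pt p q => F (z.1, z.2.2 • z.2.1)) z :=
    (hF.contDiffAt (hU.mem_nhds hz)).comp z (by fun_prop)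
  have hnear : {z : Pt p q | z.2.2 ≠ 0} ∈ 𝓝 z :=
    (isOpen_compl_singleton.preimage (by fun_prop)).mem_nhds ht
  have hinv : ContDiffAt ℝ n (fun z : Pt p q => z.2.2⁻¹) z :=
    (show ContDiffAt ℝ n (fun z : Pt p q => z.2.2) z by fun_prop).inv ht
  refine (hinv.mul hFz).congr_of_eventuallyEq ?_
  filter_upwards [hnear] with w hw
  simp only [FtildeR, if_neg hw]

theorem FtildeR_eventuallyEq {F g : (Fin p → ℝ) × (Fin q → ℝ) → ℝ} {z : Pt p q}
    (h : F =ᶠ[𝓝 (z.1, z.2.2 • z.2.1)] g) : FtildeR F =ᶠ[𝓝 z] FtildeR g := by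
  have hnear : ∀ᶠ w : Pt p q in 𝓝 z, F =ᶠ[𝓝 (w.1, w.2.2 • w.2.1)] g :=
    (by fun_prop : Continuous fun w : Pt p q => (w.1, w.2.2 • w.2.1)).continuousAt.eventually
      h.eventually_nhds
  filter_upwards [hnear] with w hw
  by_cases ht : w.2.2 = 0
  · have hslice : (fun ξ => F (w.1, ξ)) =ᶠ[𝓝 0] fun ξ => g (w.1, ξ) := by
      rw [ht, zero_smul] at hw
      exact (continuous_const.prodMk continuous_id).continuousAt.eventually hw
    simp only [FtildeR, if_pos ht, hslice.fderiv_eq]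
  · simp only [FtildeR, if_neg ht, hw.eq_of_nhds]

theorem contDiffAt_FtildeR {n : ℕ∞} {U : Set ((Fin p → ℝ) × (Fin q → ℝ))} (hU : IsOpen U)
    {F : (Fin p → ℝ) × (Fin q → ℝ) → ℝ} (hF : ContDiffOn ℝ (n + 1) F U)
    (hF0 : ∀ x : Fin p → ℝ, (x, (0 : Fin q → ℝ)) ∈ U → F (x, 0) = 0) {z : Pt p q}
    (hz : (z.1, z.2.2 • z.2.1) ∈ U) : ContDiffAt ℝ n (FtildeR F) z := by
  by_cases ht : z.2.2 = 0
  · obtain ⟨χ, hχ, hsupp, hone⟩ :=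
      exists_contDiff_tsupport_subset_eventuallyEq_one (hU.mem_nhds hz) (n + 1)
    have hg : ContDiff ℝ (n + 1) fun w => χ w • F w :=
      hF.contDiff_smul_of_tsupport_subset hU (by exact_mod_cast hχ) hsupp
    have hg0 : ∀ x, χ (x, 0) • F (x, 0) = 0 := fun x => by
      by_cases hx : (x, (0 : Fin q → ℝ)) ∈ U
      · rw [hF0 x hx, smul_zero]
      · rw [image_eq_zero_of_notMem_tsupport fun h => hx (hsupp h), zero_smul]
    have hFg : F =ᶠ[𝓝 (z.1, z.2.2 • z.2.1)] fun w => χ w • F w := by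
      filter_upwards [hone] with w hw
      rw [hw, Pi.one_apply, one_smul]
    exact (contDiff_FtildeR hg hg0).contDiffAt.congr_of_eventuallyEq (FtildeR_eventuallyEq hFg)
  · exact contDiffAt_FtildeR_of_ne_zero hU (hF.of_le le_self_add) hz ht

end Rescaling

/-- the scalar case of Lemma 3.4 of the paper: `F̃` is `C^∞` on `Ω_V^U`
(in the sense of `ContDiffOn`, with one-sided derivatives in `t` at the boundary). -/
theorem stmt2 {p q : ℕ} (U : Set ((Fin p → ℝ) × (Fin q → ℝ))) (hU : IsOpen U)
    (F : (Fin p → ℝ) × (Fin q → ℝ) → ℝ) (hF : ContDiffOn ℝ (⊤ : ℕ∞) F U)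
    (hF0 : ∀ x : Fin p → ℝ, (x, (0 : Fin q → ℝ)) ∈ U → F (x, 0) = 0) :
    ContDiffOn ℝ (⊤ : ℕ∞) (FtildeR F) (Omega U) := fun _ hz =>
  (contDiffAt_FtildeR hU (hF.of_le (by simp)) hF0 hz.2).contDiffWithinAt
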